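/- arXiv:1405.1218 — 4 statements merged into one kernel-verified Lean document; each statement's English description precedes it below -/
import Mathlib

section
/- For all real t, |t - t²/2| · e^{t - t²/2} ≤ 2·min(1, |t|). -/
/-!
Write `u = t - t²/2 = t (1 - t/2)`. Everything follows from `(1 - u) eᵘ ≤ 1`, i.e. `1 - u ≤ e⁻ᵘ`:
since `u ≤ 1/2` we have `|u| ≤ 1 - u`, giving `|u| eᵘ ≤ 1`; and `|1 - t/2| ≤ 2 (1 - u)` (a quadratic
with negative discriminant), giving `|u| eᵘ = |t| |1 - t/2| eᵘ ≤ 2 |t|`.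
-/

open Real

lemma one_sub_mul_exp_le_one (x : ℝ) : (1 - x) * exp x ≤ 1 :=
  calc (1 - x) * exp x ≤ exp (-x) * exp x := by gcongr; exact one_sub_le_exp_neg x
    _ = 1 := by rw [← exp_add, neg_add_cancel, exp_zero]

lemma abs_mul_exp_le_one {x : ℝ} (hx : x ≤ 1 / 2) : |x| * exp x ≤ 1 :=
  calc |x| * exp x ≤ (1 - x) * exp x := by gcongr; exact abs_le.2 ⟨by linarith, by linarith⟩
    _ ≤ 1 := one_sub_mul_exp_le_one x

lemma abs_one_sub_half_le (t : ℝ) : |1 - t / 2| ≤ 2 * (1 - (t - t ^ 2 / 2)) :=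
  abs_le.2 ⟨by nlinarith [sq_nonneg (t - 5 / 4)], by nlinarith [sq_nonneg (t - 3 / 4)]⟩

lemma abs_mul_exp_le_two_mul_abs (t : ℝ) :
    |t - t ^ 2 / 2| * exp (t - t ^ 2 / 2) ≤ 2 * |t| := by
  set u := t - t ^ 2 / 2
  calc |u| * exp u = |t| * (|1 - t / 2| * exp u) := by
        rw [show u = t * (1 - t / 2) by ring, abs_mul, mul_assoc]
    _ ≤ |t| * (2 * (1 - u) * exp u) := by gcongr; exact abs_one_sub_half_le t
    _ ≤ |t| * 2 := by
        gcongr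
        rw [mul_assoc]
        linarith [one_sub_mul_exp_le_one u]
    _ = 2 * |t| := mul_comm _ _

theorem abs_mul_exp_le (t : ℝ) :
    |t - t ^ 2 / 2| * Real.exp (t - t ^ 2 / 2) ≤ 2 * min 1 |t| := by
  have hle_half : t - t ^ 2 / 2 ≤ 1 / 2 := by nlinarith [sq_nonneg (t - 1)]
  rw [mul_min_of_nonneg _ _ zero_le_two]
  exact le_min (by linarith [abs_mul_exp_le_one hle_half]) (abs_mul_exp_le_two_mul_abs t)
end

section
/- Let X be a real random variable with E X = 0, E X² < ∞, and let Y = X - X²/2, Z = X² - E X². Set δ₁₁ = E[X² 1{|X|>1}] and δ₁₂ = E[|X|³ 1{|X|≤1}]. Then |E[Z e^Y]| ≤ 4.2 δ₁₁ + 1.5 δ₁₂. -/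
/-! With `g x = exp (x - x ^ 2 / 2)`, the quotients `(1 + x) / g x` and `(1 + x - x ^ 3 / 2) / g x`
have derivatives `x ^ 2 / g x` and `-x ^ 2 (1 - x + x ^ 2) / (2 g x)`, and both equal `1` at `0`;
hence `g x - 1 - x` lies between `0` and `-x ^ 3 / 2`.

Let `m = E X²`. If `m ≤ 1`, centring `X` and `X² - m` gives
`E[(X² - m) g(X)] = E[(X² - m)(g(X) - 1) + m X]`, and by the bound above the integrand is at most
`3/2 |X|³` on `{|X| ≤ 1}`, while `0 < g ≤ 2` bounds it by `2 X²` on `{|X| > 1}`.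
If `m ≥ 1`, then `X² - m ≤ 0` on `{|X| ≤ 1}`, and `0 < g ≤ 2` traps `(X² - m) g(X)` between
`2 (X² - m) - 2 X² 1{|X| > 1}` and `2 X² 1{|X| > 1}`, so `|E[(X² - m) g(X)]| ≤ 2 δ₁₁`. -/

open Real MeasureTheory

lemma hasDerivAt_div_exp_sub_sq_half {p : ℝ → ℝ} {p' x : ℝ} (hp : HasDerivAt p p' x) :
    HasDerivAt (fun y => p y / exp (y - y ^ 2 / 2))
      ((p' - p x * (1 - x)) / exp (x - x ^ 2 / 2)) x := by
  have hq : HasDerivAt (fun y => y - y ^ 2 / 2) (1 - x) x := by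
    simpa using (hasDerivAt_id' x).fun_sub ((hasDerivAt_pow 2 x).div_const 2)
  refine (hp.fun_div hq.exp (exp_pos _).ne').congr_deriv ?_
  field_simp

lemma monotone_one_add_div_exp_sub_sq_half :
    Monotone fun x : ℝ => (1 + x) / exp (x - x ^ 2 / 2) := by
  have hd (x : ℝ) := hasDerivAt_div_exp_sub_sq_half ((hasDerivAt_id' x).const_add 1)
  refine monotone_of_deriv_nonneg (fun x => (hd x).differentiableAt) fun x => ?_
  rw [(hd x).deriv]
  exact div_nonneg (by nlinarith [sq_nonneg x]) (exp_pos _).le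

lemma antitone_cubic_div_exp_sub_sq_half :
    Antitone fun x : ℝ => (1 + x - x ^ 3 / 2) / exp (x - x ^ 2 / 2) := by
  have hd (x : ℝ) := hasDerivAt_div_exp_sub_sq_half
    (((hasDerivAt_id' x).const_add 1).fun_sub ((hasDerivAt_pow 3 x).div_const 2))
  refine antitone_of_deriv_nonpos (fun x => (hd x).differentiableAt) fun x => ?_
  rw [(hd x).deriv]
  refine div_nonpos_of_nonpos_of_nonneg ?_ (exp_pos _).le
  nlinarith [sq_nonneg (x * (x - 1/2)), sq_nonneg x]

lemma exp_sub_sq_half_le_one_add {x : ℝ} (hx : 0 ≤ x) : exp (x - x ^ 2 / 2) ≤ 1 + x := by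
  have := monotone_one_add_div_exp_sub_sq_half hx
  norm_num at this
  exact (one_le_div (exp_pos _)).mp this

lemma one_add_le_exp_sub_sq_half {x : ℝ} (hx : x ≤ 0) : 1 + x ≤ exp (x - x ^ 2 / 2) := by
  have := monotone_one_add_div_exp_sub_sq_half hx
  norm_num at this
  exact (div_le_one (exp_pos _)).mp this

lemma one_add_sub_cube_half_le_exp_sub_sq_half {x : ℝ} (hx : 0 ≤ x) :
    1 + x - x ^ 3 / 2 ≤ exp (x - x ^ 2 / 2) := by
  have := antitone_cubic_div_exp_sub_sq_half hx
  norm_num at this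
  exact (div_le_one (exp_pos _)).mp this

lemma exp_sub_sq_half_le_one_add_sub_cube_half {x : ℝ} (hx : x ≤ 0) :
    exp (x - x ^ 2 / 2) ≤ 1 + x - x ^ 3 / 2 := by
  have := antitone_cubic_div_exp_sub_sq_half hx
  norm_num at this
  exact (one_le_div (exp_pos _)).mp this

lemma exp_sub_sq_half_le_two (x : ℝ) : exp (x - x ^ 2 / 2) ≤ 2 := by
  calc exp (x - x ^ 2 / 2) ≤ exp (log 2) :=
        exp_le_exp.mpr (by nlinarith [sq_nonneg (x - 1), log_two_gt_d9])
    _ = 2 := exp_log two_pos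

lemma abs_sq_sub_mul_exp_sub_one_add_mul_le_of_abs_le_one {x m : ℝ} (hx : |x| ≤ 1)
    (hm₀ : 0 ≤ m) (hm₁ : m ≤ 1) :
    |(x ^ 2 - m) * (exp (x - x ^ 2 / 2) - 1) + m * x| ≤ 3 / 2 * |x| ^ 3 := by
  obtain ⟨hx₁, hx₂⟩ := abs_le.mp hx
  rcases le_total 0 x with h | h
  · have hlo := one_add_sub_cube_half_le_exp_sub_sq_half h
    have hhi := exp_sub_sq_half_le_one_add h
    rw [abs_of_nonneg h, abs_le]
    constructor <;> nlinarith [mul_nonneg (mul_nonneg h h) (sub_nonneg.mpr hhi),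
      mul_nonneg (mul_nonneg h h) (sub_nonneg.mpr hlo), mul_nonneg hm₀ (sub_nonneg.mpr hhi),
      mul_nonneg hm₀ (sub_nonneg.mpr hlo), pow_nonneg h 3,
      mul_nonneg (pow_nonneg h 3) (sub_nonneg.mpr hm₁),
      mul_nonneg (pow_nonneg h 3) (sub_nonneg.mpr hx₂)]
  · have hlo := one_add_le_exp_sub_sq_half h
    have hhi := exp_sub_sq_half_le_one_add_sub_cube_half h
    have h' : 0 ≤ -x := neg_nonneg.mpr h
    rw [abs_of_nonpos h, abs_le]
    constructor <;> nlinarith [mul_nonneg (mul_nonneg h' h') (sub_nonneg.mpr hhi),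
      mul_nonneg (mul_nonneg h' h') (sub_nonneg.mpr hlo), mul_nonneg hm₀ (sub_nonneg.mpr hhi),
      mul_nonneg hm₀ (sub_nonneg.mpr hlo), pow_nonneg h' 3,
      mul_nonneg (pow_nonneg h' 3) (sub_nonneg.mpr hm₁),
      mul_nonneg (pow_nonneg h' 3) (by linarith : 0 ≤ x + 1)]

lemma abs_sq_sub_mul_exp_sub_one_add_mul_le_of_one_lt_abs {x m : ℝ} (hx : 1 < |x|)
    (hm₀ : 0 ≤ m) (hm₁ : m ≤ 1) :
    |(x ^ 2 - m) * (exp (x - x ^ 2 / 2) - 1) + m * x| ≤ 2 * x ^ 2 := by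
  have hx2 : |x| ≤ x ^ 2 := by rw [← sq_abs]; nlinarith
  have hsq : |x ^ 2 - m| ≤ x ^ 2 := abs_le.mpr ⟨by nlinarith, by linarith⟩
  have hexp : |exp (x - x ^ 2 / 2) - 1| ≤ 1 :=
    abs_le.mpr ⟨by linarith [exp_pos (x - x ^ 2 / 2)], by linarith [exp_sub_sq_half_le_two x]⟩
  calc |(x ^ 2 - m) * (exp (x - x ^ 2 / 2) - 1) + m * x|
      ≤ |x ^ 2 - m| * |exp (x - x ^ 2 / 2) - 1| + m * |x| := by
        rw [← abs_mul, ← abs_of_nonneg hm₀, ← abs_mul, abs_of_nonneg hm₀]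
        exact abs_add_le _ _
    _ ≤ x ^ 2 * 1 + 1 * x ^ 2 := by gcongr
    _ = 2 * x ^ 2 := by ring

lemma sq_sub_mul_exp_le_indicator {m : ℝ} (hm : 1 ≤ m) (x : ℝ) :
    (x ^ 2 - m) * exp (x - x ^ 2 / 2)
      ≤ {x : ℝ | 1 < |x|}.indicator (fun x => 2 * x ^ 2) x := by
  have hexp := exp_sub_sq_half_le_two x
  have hpos := exp_pos (x - x ^ 2 / 2)
  simp only [Set.indicator_apply, Set.mem_ofPred_eq]
  split_ifs with hx
  · nlinarith [mul_le_mul_of_nonneg_left hexp (sq_nonneg x)]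
  · have : x ^ 2 ≤ 1 := by rw [← sq_abs]; nlinarith [abs_nonneg x]
    nlinarith

lemma two_mul_sq_sub_sub_indicator_le_sq_sub_mul_exp {m : ℝ} (hm : 1 ≤ m) (x : ℝ) :
    2 * (x ^ 2 - m) - {x : ℝ | 1 < |x|}.indicator (fun x => 2 * x ^ 2) x
      ≤ (x ^ 2 - m) * exp (x - x ^ 2 / 2) := by
  have hexp := exp_sub_sq_half_le_two x
  have hpos := exp_pos (x - x ^ 2 / 2)
  simp only [Set.indicator_apply, Set.mem_ofPred_eq]
  split_ifs with hx
  · nlinarith [sq_nonneg x, mul_nonneg (sq_nonneg x) hpos.le]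
  · have : x ^ 2 ≤ 1 := by rw [← sq_abs]; nlinarith [abs_nonneg x]
    nlinarith

section
variable {Ω : Type*} [MeasurableSpace Ω] {μ : Measure Ω}

lemma abs_integral_le_setIntegral_add_setIntegral_compl {f g h : Ω → ℝ} {s : Set Ω}
    (hs : MeasurableSet s) (hf : Integrable f μ) (hg : IntegrableOn g s μ)
    (hh : IntegrableOn h sᶜ μ) (hfg : ∀ ω ∈ s, |f ω| ≤ g ω) (hfh : ∀ ω ∈ sᶜ, |f ω| ≤ h ω) :
    |∫ ω, f ω ∂μ| ≤ (∫ ω in s, g ω ∂μ) + ∫ ω in sᶜ, h ω ∂μ := by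
  rw [← integral_add_compl hs hf]
  refine (abs_add_le _ _).trans (add_le_add ?_ ?_)
  · exact norm_integral_le_of_norm_le (f := f) hg
      ((ae_restrict_iff' hs).mpr (.of_forall fun ω hω => (hfg ω hω : ‖f ω‖ ≤ g ω)))
  · exact norm_integral_le_of_norm_le (f := f) hh
      ((ae_restrict_iff' hs.compl).mpr (.of_forall fun ω hω => (hfh ω hω : ‖f ω‖ ≤ h ω)))

variable [IsProbabilityMeasure μ] {X : Ω → ℝ}

lemma integrable_sq_sub_mul_exp (hX : Measurable X) (hX2 : Integrable (fun ω => X ω ^ 2) μ)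
    (m : ℝ) : Integrable (fun ω => (X ω ^ 2 - m) * exp (X ω - X ω ^ 2 / 2)) μ :=
  (hX2.sub' (integrable_const m)).mul_bdd (by fun_prop) (c := 2) (.of_forall fun ω => by
    rw [Real.norm_of_nonneg (exp_pos _).le]; exact exp_sub_sq_half_le_two (X ω))

lemma integral_sq_sub_mul_eq {G : Ω → ℝ} (hX : Integrable X μ)
    (hX2 : Integrable (fun ω => X ω ^ 2) μ) (hmean : ∫ ω, X ω ∂μ = 0)
    (hG : Integrable (fun ω => (X ω ^ 2 - ∫ ω, X ω ^ 2 ∂μ) * G ω) μ) :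
    ∫ ω, (X ω ^ 2 - ∫ ω, X ω ^ 2 ∂μ) * G ω ∂μ
      = ∫ ω, ((X ω ^ 2 - ∫ ω, X ω ^ 2 ∂μ) * (G ω - 1) + (∫ ω, X ω ^ 2 ∂μ) * X ω) ∂μ := by
  have hZ := hX2.sub' (integrable_const (∫ ω, X ω ^ 2 ∂μ))
  simp_rw [mul_sub, mul_one]
  rw [integral_add (hG.sub' hZ) (hX.const_mul _), integral_sub hG hZ, integral_sub hX2
    (integrable_const _), integral_const_mul, hmean]
  simp

lemma abs_integral_sq_sub_mul_exp_le_of_le_one (hX : Measurable X)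
    (hX2 : Integrable (fun ω => X ω ^ 2) μ) (hmean : ∫ ω, X ω ∂μ = 0)
    (hm : ∫ ω, X ω ^ 2 ∂μ ≤ 1) :
    |∫ ω, (X ω ^ 2 - ∫ ω, X ω ^ 2 ∂μ) * exp (X ω - X ω ^ 2 / 2) ∂μ|
      ≤ 2 * (∫ ω in {ω | 1 < |X ω|}, X ω ^ 2 ∂μ)
        + 3 / 2 * ∫ ω in {ω | |X ω| ≤ 1}, |X ω| ^ 3 ∂μ := by
  have hXint : Integrable X μ :=
    ((memLp_two_iff_integrable_sq hX.aestronglyMeasurable).mpr hX2).integrable one_le_two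
  have hm₀ : 0 ≤ ∫ ω, X ω ^ 2 ∂μ := integral_nonneg fun ω => sq_nonneg (X ω)
  have hA : MeasurableSet {ω | |X ω| ≤ 1} := measurableSet_le (by fun_prop) measurable_const
  have hAc : {ω | |X ω| ≤ 1}ᶜ = {ω | 1 < |X ω|} := by ext; simp
  have hcube : IntegrableOn (fun ω => |X ω| ^ 3) {ω | |X ω| ≤ 1} μ := by
    refine Measure.integrableOn_of_bounded (M := 1) (measure_ne_top _ _) (by fun_prop) ?_
    filter_upwards [ae_restrict_mem hA] with ω hω
    rw [Real.norm_of_nonneg (by positivity)]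
    exact pow_le_one₀ (abs_nonneg _) hω
  rw [integral_sq_sub_mul_eq hXint hX2 hmean (integrable_sq_sub_mul_exp hX hX2 _), add_comm,
    ← integral_const_mul, ← integral_const_mul, ← hAc]
  refine abs_integral_le_setIntegral_add_setIntegral_compl hA
    (((integrable_sq_sub_mul_exp hX hX2 _).sub' (hX2.sub' (integrable_const _))).fun_add
      (hXint.const_mul _) |>.congr (.of_forall fun ω => by ring))
    (hcube.const_mul _) (hX2.integrableOn.const_mul _) (fun ω hω => ?_) (fun ω hω => ?_)
  · exact abs_sq_sub_mul_exp_sub_one_add_mul_le_of_abs_le_one hω hm₀ hm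
  · exact abs_sq_sub_mul_exp_sub_one_add_mul_le_of_one_lt_abs (by simpa using hω) hm₀ hm

lemma abs_integral_sq_sub_mul_exp_le_of_one_le (hX : Measurable X)
    (hX2 : Integrable (fun ω => X ω ^ 2) μ) (hm : 1 ≤ ∫ ω, X ω ^ 2 ∂μ) :
    |∫ ω, (X ω ^ 2 - ∫ ω, X ω ^ 2 ∂μ) * exp (X ω - X ω ^ 2 / 2) ∂μ|
      ≤ 2 * ∫ ω in {ω | 1 < |X ω|}, X ω ^ 2 ∂μ := by
  set B : Set Ω := X ⁻¹' {x | 1 < |x|}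
  have hB : MeasurableSet B := hX (measurableSet_lt measurable_const measurable_abs)
  have htail : Integrable (B.indicator fun ω => 2 * X ω ^ 2) μ := (hX2.const_mul 2).indicator hB
  have htail_eq : ∫ ω, B.indicator (fun ω => 2 * X ω ^ 2) ω ∂μ
      = 2 * ∫ ω in {ω | 1 < |X ω|}, X ω ^ 2 ∂μ := by
    rw [integral_indicator hB, integral_const_mul]; rfl
  have hupper := integral_mono (integrable_sq_sub_mul_exp hX hX2 _) htail fun ω =>
    (sq_sub_mul_exp_le_indicator hm (X ω)).trans_eq (Set.indicator_comp_right X).symm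
  have hlower := integral_mono
    (((hX2.sub' (integrable_const _)).const_mul 2).sub' htail) (integrable_sq_sub_mul_exp hX hX2 _)
    fun ω => (Set.indicator_comp_right X (g := fun x => 2 * x ^ 2) ▸
      two_mul_sq_sub_sub_indicator_le_sq_sub_mul_exp hm (X ω))
  rw [integral_sub (((hX2.sub' (integrable_const _)).const_mul 2)) htail, integral_const_mul,
    integral_sub hX2 (integrable_const _)] at hlower
  simp only [integral_const, probReal_univ, smul_eq_mul, one_mul, sub_self, mul_zero] at hlower
  exact abs_le.mpr ⟨by linarith, by linarith⟩

end

theorem lemma_l3_a {Ω : Type*} [MeasurableSpace Ω] (μ : Measure Ω) [IsProbabilityMeasure μ]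
    (X : Ω → ℝ) (hX : Measurable X) (hX2 : Integrable (fun ω => X ω ^ 2) μ)
    (hmean : ∫ ω, X ω ∂μ = 0)
    (Y Z : Ω → ℝ) (hY : ∀ ω, Y ω = X ω - X ω ^ 2 / 2)
    (hZ : ∀ ω, Z ω = X ω ^ 2 - ∫ ω, X ω ^ 2 ∂μ)
    (δ₁₁ δ₁₂ : ℝ) (hδ₁₁ : δ₁₁ = ∫ ω in {ω | 1 < |X ω|}, X ω ^ 2 ∂μ)
    (hδ₁₂ : δ₁₂ = ∫ ω in {ω | |X ω| ≤ 1}, |X ω| ^ 3 ∂μ) :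
    |∫ ω, Z ω * Real.exp (Y ω) ∂μ| ≤ 4.2 * δ₁₁ + 1.5 * δ₁₂ := by
  have hδ₁₁₀ : 0 ≤ δ₁₁ :=
    hδ₁₁ ▸ setIntegral_nonneg_of_ae (.of_forall fun ω => sq_nonneg (X ω))
  have hδ₁₂₀ : 0 ≤ δ₁₂ := hδ₁₂ ▸ integral_nonneg fun ω => by positivity
  simp only [hY, hZ]
  rcases le_total (∫ ω, X ω ^ 2 ∂μ) 1 with hm | hm
  · have := abs_integral_sq_sub_mul_exp_le_of_le_one hX hX2 hmean hm
    rw [← hδ₁₁, ← hδ₁₂] at this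
    linarith
  · have := abs_integral_sq_sub_mul_exp_le_of_one_le hX hX2 hm
    rw [← hδ₁₁] at this
    linarith
end

section
/- Let X be a real random variable with E X = 0, E X² < ∞, and let Y = X - X²/2, Z = X² - E X². Set δ₁₁ = E[X² 1{|X|>1}] and δ₁₂ = E[|X|³ 1{|X|≤1}]. Then E[|Y| Z² e^Y] ≤ 3.1 δ₁₁ + δ₁₂ + δ₁₁². -/
/-!
Write `g t = |t - t²/2| e^(t - t²/2)` (`expWeight`), so that the integrand is `g(X) Z²`, and
`m = E[X² 1{|X| ≤ 1}]` (`truncSecondMoment`), so that `E X² = m + δ₁₁` and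
`g(X) Z² = g(X)(X² - m)² + 2δ₁₁ g(X)(m - X²) + δ₁₁² g(X)`.
Everything then reduces to elementary inequalities for `g`. Always `g ≤ 0.825`.
For `|t| ≤ 1`, `g(t)(t² - m)² + 0.4 m²(t² - m) ≤ |t|³`, and the correction term has
nonnegative expectation on `{|X| ≤ 1}`. For `|t| ≥ 1`, `g(t)(t² - m)² ≤ (3.05 - 0.6 m) t²`,
by convexity in `m` between the cases `m = 0` and `m = 1`. Finally `g(t)(m - t²)` is at most
`0.439 m √m`, and at most `0.825 m (1 - t²)⁺`, whose expectation is at most `0.825 m (1 - m)`;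
for small and for large `m` respectively, twice this bound is absorbed by the gain `0.6 m` in
the coefficient of `δ₁₁`.
-/

open MeasureTheory Real

lemma exp_half_le : exp (1 / 2) ≤ 1.65 := by
  nlinarith [exp_one_lt_d9, exp_pos (1 / 2), (exp_add (1 / 2) (1 / 2)).symm]

lemma exp_le_cubic {x : ℝ} (h0 : 0 ≤ x) (h1 : x ≤ 1) :
    exp x ≤ 1 + x + x ^ 2 / 2 + 2 / 9 * x ^ 3 := by
  have h := abs_le.1 (exp_bound (x := x) (by rwa [abs_of_nonneg h0]) (n := 3) (by norm_num))
  norm_num [Finset.sum_range_succ, Nat.factorial, abs_of_nonneg h0] at h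
  nlinarith [h.2]

noncomputable def expTaylor6 (v : ℝ) : ℝ :=
  1 + v + v ^ 2 / 2 + v ^ 3 / 6 + v ^ 4 / 24 + v ^ 5 / 120 + v ^ 6 / 720

lemma expTaylor6_le_exp {v : ℝ} (h0 : 0 ≤ v) : expTaylor6 v ≤ exp v := by
  have h := sum_le_exp_of_nonneg h0 7
  norm_num [Finset.sum_range_succ, Nat.factorial] at h
  rw [expTaylor6]; linarith

lemma le_exp_of_le_expTaylor6 {v a : ℝ} (h0 : 0 ≤ v) (c : ℝ) (hc : 0 ≤ c)
    (h : a ≤ c * expTaylor6 v) : a ≤ c * exp v :=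
  h.trans (mul_le_mul_of_nonneg_left (expTaylor6_le_exp h0) hc)

lemma mul_exp_neg_mul_le {v a c : ℝ} (h : v * a ≤ c * exp v) : v * exp (-v) * a ≤ c := by
  rwa [exp_neg, mul_right_comm, ← div_eq_mul_inv, div_le_iff₀ (exp_pos v)]

noncomputable def expWeight (t : ℝ) : ℝ := |t - t ^ 2 / 2| * exp (t - t ^ 2 / 2)

lemma expWeight_nonneg (t : ℝ) : 0 ≤ expWeight t := by unfold expWeight; positivity

@[fun_prop]
lemma continuous_expWeight : Continuous expWeight := by unfold expWeight; fun_prop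

lemma expWeight_of_nonneg {t : ℝ} (h : 0 ≤ t - t ^ 2 / 2) :
    expWeight t = (t - t ^ 2 / 2) * exp (t - t ^ 2 / 2) := by
  rw [expWeight, abs_of_nonneg h]

lemma expWeight_of_nonpos {t : ℝ} (h : t - t ^ 2 / 2 ≤ 0) :
    expWeight t = (t ^ 2 / 2 - t) * exp (-(t ^ 2 / 2 - t)) := by
  rw [expWeight, abs_of_nonpos h, neg_sub, neg_sub]

lemma exp_sub_sq_div_two_le (t : ℝ) : exp (t - t ^ 2 / 2) ≤ 1.65 :=
  (exp_le_exp.2 (by nlinarith [sq_nonneg (t - 1)])).trans exp_half_le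

lemma expWeight_le (t : ℝ) : expWeight t ≤ 0.825 := by
  rcases le_total 0 (t - t ^ 2 / 2) with h | h
  · rw [expWeight_of_nonneg h]
    nlinarith [exp_sub_sq_div_two_le t, exp_pos (t - t ^ 2 / 2), sq_nonneg (t - 1)]
  · rw [expWeight_of_nonpos h]
    have hv : 0 ≤ t ^ 2 / 2 - t := by linarith
    set v := t ^ 2 / 2 - t
    have hpoly : v * 1 ≤ 0.825 * expTaylor6 v := by
      unfold expTaylor6
      nlinarith [sq_nonneg (v - 1), pow_nonneg hv 3, pow_nonneg hv 4, pow_nonneg hv 5,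
        pow_nonneg hv 6]
    simpa using mul_exp_neg_mul_le (le_exp_of_le_expTaylor6 hv _ (by norm_num) hpoly)

lemma sq_le_three_mul_sq_div_two_sub_add (t : ℝ) : t ^ 2 ≤ 3 * (t ^ 2 / 2 - t) + 4.5 := by
  nlinarith [sq_nonneg (t - 3)]

lemma expWeight_mul_sq_le (t : ℝ) : expWeight t * t ^ 2 ≤ 3.05 := by
  rcases le_total 0 (t - t ^ 2 / 2) with h | h
  · rw [expWeight_of_nonneg h]
    have hpoly : (t - t ^ 2 / 2) * t ^ 2 ≤ 27 / 32 := by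
      nlinarith [mul_nonneg (sq_nonneg (t - 3 / 2)) (by nlinarith : 0 ≤ t ^ 2 + t + 3 / 4)]
    nlinarith [mul_le_mul_of_nonneg_left (exp_sub_sq_div_two_le t)
      (mul_nonneg h (sq_nonneg t))]
  · rw [expWeight_of_nonpos h]
    have hv : 0 ≤ t ^ 2 / 2 - t := by linarith
    have ht := sq_le_three_mul_sq_div_two_sub_add t
    set v := t ^ 2 / 2 - t
    refine mul_exp_neg_mul_le (le_exp_of_le_expTaylor6 hv _ (by norm_num) ?_)
    have hpoly : v * (3 * v + 4.5) ≤ 3.05 * expTaylor6 v := by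
      unfold expTaylor6
      nlinarith [sq_nonneg (v - 1.5), mul_nonneg hv (sq_nonneg (v - 1.5)),
        mul_nonneg (pow_nonneg hv 2) (sq_nonneg (v - 1.5)),
        mul_nonneg (pow_nonneg hv 3) (sq_nonneg (v - 1.5)),
        mul_nonneg (pow_nonneg hv 4) (sq_nonneg (v - 1.5)), pow_nonneg hv 2]
    nlinarith [mul_le_mul_of_nonneg_left ht hv]

lemma mul_sq_sub_one_sq_le_of_two_le {t : ℝ} (ht : 2 ≤ t) :
    (t ^ 2 / 2 - t) * (t ^ 2 - 1) ^ 2 ≤ 2.45 * t ^ 2 * expTaylor6 (t ^ 2 / 2 - t) := by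
  have hv : 0 ≤ t ^ 2 / 2 - t := by nlinarith
  have hsq := sq_le_three_mul_sq_div_two_sub_add t
  set v := t ^ 2 / 2 - t with hv_def
  have hpos : 0 < 2 * v + 4 := by linarith
  have hpoly : v * (6 * v ^ 2 + 17 * v + 11) ≤ 2.45 * (2 * v + 4) * expTaylor6 v := by
    unfold expTaylor6
    nlinarith [sq_nonneg (v - 1.5), mul_nonneg hv (sq_nonneg (v - 1.5)),
      mul_nonneg (pow_nonneg hv 2) (sq_nonneg (v - 1.5)),
      mul_nonneg (pow_nonneg hv 3) (sq_nonneg (v - 1.5)),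
      mul_nonneg (pow_nonneg hv 4) (sq_nonneg (v - 1.5)),
      mul_nonneg (pow_nonneg hv 5) (sq_nonneg (v - 1.5)), pow_nonneg hv 2]
  -- `(t² - 1)² = t² (t² - 2) + 1`, with `t² - 2 ≤ 3v + 2.5` and `1 ≤ t² / (2v + 4)`
  have hsq' : (t ^ 2 - 1) ^ 2 * (2 * v + 4) ≤ t ^ 2 * ((3 * v + 2.5) * (2 * v + 4) + 1) := by
    nlinarith [mul_le_mul_of_nonneg_right hsq (mul_nonneg (sq_nonneg t) hpos.le)]
  refine le_of_mul_le_mul_right ?_ hpos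
  calc v * (t ^ 2 - 1) ^ 2 * (2 * v + 4)
      ≤ v * (t ^ 2 * ((3 * v + 2.5) * (2 * v + 4) + 1)) := by
        rw [mul_assoc]; exact mul_le_mul_of_nonneg_left hsq' hv
    _ = t ^ 2 * (v * (6 * v ^ 2 + 17 * v + 11)) := by ring
    _ ≤ t ^ 2 * (2.45 * (2 * v + 4) * expTaylor6 v) :=
        mul_le_mul_of_nonneg_left hpoly (sq_nonneg t)
    _ = 2.45 * t ^ 2 * expTaylor6 v * (2 * v + 4) := by ring

lemma expWeight_mul_sq_sub_one_sq_le {t : ℝ} (ht : 1 ≤ |t|) :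
    expWeight t * (t ^ 2 - 1) ^ 2 ≤ 2.45 * t ^ 2 := by
  rcases le_total 0 (t - t ^ 2 / 2) with h | h
  · have ht0 : 0 ≤ t := by nlinarith [sq_nonneg t]
    have ht1 : 1 ≤ t := by rwa [abs_of_nonneg ht0] at ht
    have ht2 : t ≤ 2 := by nlinarith
    rw [expWeight_of_nonneg h]
    have hpoly : (t - t ^ 2 / 2) * (t ^ 2 - 1) ^ 2 * 1.65 ≤ 2.45 * t ^ 2 := by
      nlinarith [mul_nonneg (sub_nonneg.2 ht1) (sub_nonneg.2 ht2),
        mul_nonneg (mul_nonneg (sub_nonneg.2 ht1) (sub_nonneg.2 ht2)) ht0, sq_nonneg (t - 1)]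
    nlinarith [mul_le_mul_of_nonneg_left (exp_sub_sq_div_two_le t)
      (mul_nonneg h (sq_nonneg (t ^ 2 - 1)))]
  · rw [expWeight_of_nonpos h]
    have hv : 0 ≤ t ^ 2 / 2 - t := by linarith
    refine mul_exp_neg_mul_le ?_
    rcases le_or_gt 2 t with ht2 | ht2
    · exact le_exp_of_le_expTaylor6 hv _ (by positivity) (mul_sq_sub_one_sq_le_of_two_le ht2)
    · have htn : t ≤ -1 := by
        rcases abs_cases t with ⟨h', _⟩ | ⟨h', _⟩ <;> nlinarith
      -- here `t² = 2v + 2t ≤ 2v - 2`, so `(t² - 1)² ≤ t² (t² - 1) ≤ t² (2v - 3)`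
      set v := t ^ 2 / 2 - t with hv_def
      have hsq : (t ^ 2 - 1) ^ 2 ≤ t ^ 2 * (2 * v - 3) := by nlinarith
      have hpoly : v * (2 * v - 3) ≤ 2.45 * expTaylor6 v := by
        unfold expTaylor6
        nlinarith [pow_nonneg hv 3, pow_nonneg hv 4, pow_nonneg hv 5, pow_nonneg hv 6,
          sq_nonneg (v - 1)]
      calc v * (t ^ 2 - 1) ^ 2 ≤ v * (t ^ 2 * (2 * v - 3)) := mul_le_mul_of_nonneg_left hsq hv
        _ = t ^ 2 * (v * (2 * v - 3)) := by ring
        _ ≤ t ^ 2 * (2.45 * exp v) := mul_le_mul_of_nonneg_left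
          (le_exp_of_le_expTaylor6 hv _ (by norm_num) hpoly) (sq_nonneg t)
        _ = 2.45 * t ^ 2 * exp v := by ring

lemma expWeight_mul_sq_sub_sq_le_of_one_le_abs {t m : ℝ} (ht : 1 ≤ |t|) (hm0 : 0 ≤ m)
    (hm1 : m ≤ 1) : expWeight t * (t ^ 2 - m) ^ 2 ≤ (3.05 - 0.6 * m) * t ^ 2 := by
  have hconv : (t ^ 2 - m) ^ 2 ≤ (1 - m) * (t ^ 2 * t ^ 2) + m * (t ^ 2 - 1) ^ 2 := by
    nlinarith [mul_nonneg hm0 (sub_nonneg.2 hm1)]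
  have h0 := mul_le_mul_of_nonneg_right (expWeight_mul_sq_le t) (sq_nonneg t)
  have h1 := expWeight_mul_sq_sub_one_sq_le ht
  calc expWeight t * (t ^ 2 - m) ^ 2
      ≤ (1 - m) * (expWeight t * t ^ 2 * t ^ 2) + m * (expWeight t * (t ^ 2 - 1) ^ 2) := by
        nlinarith [mul_le_mul_of_nonneg_left hconv (expWeight_nonneg t)]
    _ ≤ (1 - m) * (3.05 * t ^ 2) + m * (2.45 * t ^ 2) := by gcongr
    _ = (3.05 - 0.6 * m) * t ^ 2 := by ring

lemma expWeight_neg_le {t : ℝ} (h0 : 0 ≤ t) (h1 : t ≤ 1) : expWeight (-t) ≤ expWeight t := by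
  have hy : 0 ≤ t - t ^ 2 / 2 := by nlinarith
  rw [expWeight_of_nonpos (by nlinarith), expWeight_of_nonneg hy]
  -- after multiplying by `exp (t + t² / 2)` this reads `t + t² / 2 ≤ (t - t² / 2) exp (2t)`
  have h2t : 0 ≤ 2 * t := by linarith
  have hexp : t + t ^ 2 / 2 ≤ (t - t ^ 2 / 2) * exp (2 * t) := by
    have h := mul_le_mul_of_nonneg_left (expTaylor6_le_exp h2t) hy
    unfold expTaylor6 at h
    nlinarith [pow_nonneg h0 3, pow_nonneg h0 4, pow_nonneg h0 5, pow_nonneg h0 6,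
      pow_nonneg h0 7, pow_nonneg h0 8, mul_nonneg (pow_nonneg h0 3) (sub_nonneg.2 h1)]
  have hsplit : exp (2 * t) = exp (t - t ^ 2 / 2) * exp (t + t ^ 2 / 2) := by
    rw [← exp_add]; ring_nf
  have hneg : (-t) ^ 2 / 2 - -t = t + t ^ 2 / 2 := by ring
  rw [hneg, exp_neg, ← div_eq_mul_inv, div_le_iff₀ (exp_pos _), mul_assoc, ← hsplit]
  exact hexp

lemma expWeight_le_abs_of_abs_le_one {t : ℝ} (h : |t| ≤ 1) : expWeight t ≤ expWeight |t| := by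
  rcases le_total 0 t with ht | ht
  · rw [abs_of_nonneg ht]
  · rw [abs_of_nonpos ht] at h ⊢
    simpa using expWeight_neg_le (neg_nonneg.2 ht) h

lemma expWeight_le_cubic {t : ℝ} (h0 : 0 ≤ t) (h1 : t ≤ 1) :
    expWeight t ≤ (t - t ^ 2 / 2) *
      (1 + (t - t ^ 2 / 2) + (t - t ^ 2 / 2) ^ 2 / 2 + 2 / 9 * (t - t ^ 2 / 2) ^ 3) := by
  have hy : 0 ≤ t - t ^ 2 / 2 := by nlinarith
  rw [expWeight_of_nonneg hy]
  exact mul_le_mul_of_nonneg_left (exp_le_cubic hy (by nlinarith)) hy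

lemma expWeight_le_mul_self {t : ℝ} (h0 : 0 ≤ t) (h1 : t ≤ 1) : expWeight t ≤ 1.14 * t := by
  have h := expWeight_le_cubic h0 h1
  have h1t : 0 ≤ 1 - t := by linarith
  nlinarith [mul_nonneg (mul_nonneg h0 h0) h0, mul_nonneg h0 (sq_nonneg (t - 2 / 5)),
    mul_nonneg h1t (sq_nonneg (t - 2 / 5)),
    mul_nonneg (mul_nonneg h1t h0) (sq_nonneg (t - 2 / 5)),
    mul_nonneg (mul_nonneg (mul_nonneg h1t h0) h0) (sq_nonneg (t - 2 / 5)),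
    mul_nonneg (mul_nonneg (mul_nonneg (mul_nonneg h1t h0) h0) h0) (sq_nonneg (t - 2 / 5))]

lemma expWeight_le_add_sq {t : ℝ} (h0 : 0 ≤ t) (h1 : t ≤ 1) :
    expWeight t ≤ t + 0.8 * t ^ 2 := by
  have h := expWeight_le_cubic h0 h1
  nlinarith [mul_nonneg h0 h0, pow_nonneg h0 3, pow_nonneg h0 4, pow_nonneg h0 5,
    pow_nonneg h0 6, pow_nonneg h0 7, pow_nonneg h0 8,
    mul_nonneg (pow_nonneg h0 4) (sub_nonneg.2 h1)]

lemma expWeight_mul_sq_sub_sq_add_le_of_abs_le_one {t m : ℝ} (ht : |t| ≤ 1) (hm0 : 0 ≤ m) :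
    expWeight t * (t ^ 2 - m) ^ 2 + 0.4 * m ^ 2 * (t ^ 2 - m) ≤ |t| ^ 3 := by
  have hw := expWeight_le_abs_of_abs_le_one ht
  rw [← sq_abs t]
  set s := |t|
  have hs : 0 ≤ s := abs_nonneg t
  rcases le_total m (s ^ 2) with hc | hc
  · have h4 : s ^ 4 ≤ s ^ 3 := pow_le_pow_of_le_one hs ht (by norm_num)
    have h6 : s ^ 6 ≤ s ^ 3 := pow_le_pow_of_le_one hs ht (by norm_num)
    have hsq : (s ^ 2 - m) ^ 2 ≤ s ^ 4 := by nlinarith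
    -- the maximum over `m` is at `m = 2 s² / 3`
    have hcubic : 27 * (m ^ 2 * (s ^ 2 - m)) ≤ 4 * s ^ 6 := by
      nlinarith [mul_nonneg (sq_nonneg (3 * m - 2 * s ^ 2)) (by nlinarith : 0 ≤ 3 * m + s ^ 2)]
    nlinarith [mul_le_mul (expWeight_le t) hsq (sq_nonneg _) (by norm_num)]
  · have hu : 0 ≤ m - s ^ 2 := by linarith
    set u := m - s ^ 2
    have hm : m = s ^ 2 + u := by ring
    have hamgm : s * u ^ 2 ≤ 0.4 * u ^ 3 + s ^ 3 := by
      nlinarith [mul_nonneg (sq_nonneg (3 * u - 5 * s)) (by nlinarith : 0 ≤ 6 * u + 5 * s),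
        pow_nonneg hs 3]
    have hw' := mul_le_mul_of_nonneg_right (hw.trans (expWeight_le_add_sq hs ht)) (sq_nonneg u)
    rw [hm]
    nlinarith [mul_nonneg (pow_nonneg hs 4) hu]

lemma expWeight_mul_sub_sq_le_sqrt {t m : ℝ} (hm0 : 0 ≤ m) (hm1 : m ≤ 1) :
    expWeight t * (m - t ^ 2) ≤ 0.439 * m * √m := by
  rcases le_total (m - t ^ 2) 0 with hc | hc
  · exact (mul_nonpos_of_nonneg_of_nonpos (expWeight_nonneg t) hc).trans (by positivity)
  have ht : |t| ≤ 1 := by rw [← sq_le_one_iff_abs_le_one]; linarith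
  have hw := (expWeight_le_abs_of_abs_le_one ht).trans (expWeight_le_mul_self (abs_nonneg t) ht)
  -- `s (m - s²)` is maximal at `s = √(m / 3)`, where it equals `2 / (3√3) · m √m < 0.385 m √m`
  have hmax : |t| * (m - t ^ 2) ≤ 0.385 * m * √m := by
    rw [← pow_le_pow_iff_left₀ (mul_nonneg (abs_nonneg t) hc) (by positivity) two_ne_zero,
      mul_pow, sq_abs, mul_pow, mul_pow, sq_sqrt hm0]
    nlinarith [mul_nonneg (sq_nonneg (3 * t ^ 2 - m)) (by linarith : 0 ≤ 4 * m - 3 * t ^ 2)]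
  calc expWeight t * (m - t ^ 2) ≤ 1.14 * (|t| * (m - t ^ 2)) := by
        rw [← mul_assoc]; exact mul_le_mul_of_nonneg_right hw hc
    _ ≤ 1.14 * (0.385 * m * √m) := by gcongr
    _ ≤ 0.439 * m * √m := by nlinarith [mul_nonneg hm0 (sqrt_nonneg m)]

lemma expWeight_mul_sub_sq_le_of_abs_le_one {t m : ℝ} (ht : |t| ≤ 1) (hm0 : 0 ≤ m)
    (hm1 : m ≤ 1) :
    expWeight t * (m - t ^ 2) ≤ 0.825 * m * (1 - t ^ 2) := by
  have ht2 : t ^ 2 ≤ 1 := sq_le_one_iff_abs_le_one t |>.2 ht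
  rcases le_total (m - t ^ 2) 0 with hc | hc
  · exact (mul_nonpos_of_nonneg_of_nonpos (expWeight_nonneg t) hc).trans
      (mul_nonneg (by positivity) (by linarith))
  · have hsub : m - t ^ 2 ≤ m * (1 - t ^ 2) := by nlinarith
    calc expWeight t * (m - t ^ 2) ≤ 0.825 * (m * (1 - t ^ 2)) :=
          mul_le_mul (expWeight_le t) hsub hc (by norm_num)
      _ = 0.825 * m * (1 - t ^ 2) := by ring

lemma expWeight_mul_sub_sq_nonpos_of_one_lt_abs {t m : ℝ} (ht : 1 < |t|) (hm1 : m ≤ 1) :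
    expWeight t * (m - t ^ 2) ≤ 0 := by
  have ht2 : 1 < t ^ 2 := one_lt_sq_iff_one_lt_abs t |>.2 ht
  exact mul_nonpos_of_nonneg_of_nonpos (expWeight_nonneg t) (by linarith)

lemma expWeight_mul_sq_sub_sq_le {t m : ℝ} (hm0 : 0 ≤ m) (hm1 : m ≤ 1) :
    expWeight t * (t ^ 2 - m) ^ 2 ≤ 3.05 * t ^ 2 + 1 := by
  rcases le_total 1 |t| with ht | ht
  · nlinarith [expWeight_mul_sq_sub_sq_le_of_one_le_abs ht hm0 hm1, sq_nonneg t]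
  · have ht2 : t ^ 2 ≤ 1 := sq_le_one_iff_abs_le_one t |>.2 ht
    have hsq : (t ^ 2 - m) ^ 2 ≤ 1 := by nlinarith [sq_nonneg t]
    nlinarith [mul_le_mul (expWeight_le t) hsq (sq_nonneg _) (by norm_num), sq_nonneg t]

lemma sub_add_two_mul_min_le {m : ℝ} (hm0 : 0 ≤ m) (hm1 : m ≤ 1) :
    3.05 - 0.6 * m + 2 * min (0.439 * m * √m) (0.825 * m * (1 - m)) ≤ 3.1 := by
  rcases le_total m 0.6 with hm | hm
  · have hs := sq_sqrt hm0
    have hs0 := sqrt_nonneg m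
    have hs1 : √m ≤ 0.775 := by nlinarith
    nlinarith [min_le_left (0.439 * m * √m) (0.825 * m * (1 - m)),
      mul_le_mul_of_nonneg_right hs1 (sq_nonneg √m)]
  · nlinarith [min_le_right (0.439 * m * √m) (0.825 * m * (1 - m)), sq_nonneg (m - 0.6)]

noncomputable def truncSecondMoment {Ω : Type*} [MeasurableSpace Ω] (μ : Measure Ω)
    (X : Ω → ℝ) : ℝ :=
  ∫ ω in {ω | |X ω| ≤ 1}, X ω ^ 2 ∂μ

lemma compl_setOf_abs_le_one {α : Type*} {X : α → ℝ} :
    {a | |X a| ≤ 1}ᶜ = {a | 1 < |X a|} := by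
  ext; simp

section

variable {Ω : Type*} [MeasurableSpace Ω] {μ : Measure Ω} {X : Ω → ℝ}

lemma measurableSet_abs_le_one (hX : Measurable X) : MeasurableSet {ω | |X ω| ≤ 1} :=
  measurableSet_le hX.abs measurable_const

lemma integral_comp_le_of_abs_le_one (hX : Measurable X) {f a b : ℝ → ℝ}
    (hf : Integrable (fun ω => f (X ω)) μ)
    (ha : IntegrableOn (fun ω => a (X ω)) {ω | |X ω| ≤ 1} μ)
    (hb : IntegrableOn (fun ω => b (X ω)) {ω | 1 < |X ω|} μ)
    (hfa : ∀ t, |t| ≤ 1 → f t ≤ a t) (hfb : ∀ t, 1 < |t| → f t ≤ b t) :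
    ∫ ω, f (X ω) ∂μ ≤
      (∫ ω in {ω | |X ω| ≤ 1}, a (X ω) ∂μ) + ∫ ω in {ω | 1 < |X ω|}, b (X ω) ∂μ := by
  have hA := measurableSet_abs_le_one hX
  rw [← integral_add_compl hA hf, compl_setOf_abs_le_one]
  exact add_le_add (setIntegral_mono_on hf.integrableOn ha hA fun ω hω => hfa _ hω)
    (setIntegral_mono_on hf.integrableOn hb (measurableSet_lt measurable_const hX.abs)
      fun ω hω => hfb _ hω)

lemma truncSecondMoment_nonneg : 0 ≤ truncSecondMoment μ X :=
  setIntegral_nonneg_of_ae_restrict (ae_of_all _ fun ω => sq_nonneg (X ω))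

lemma truncSecondMoment_add (hX : Measurable X) (hX2 : Integrable (fun ω => X ω ^ 2) μ) :
    truncSecondMoment μ X + ∫ ω in {ω | 1 < |X ω|}, X ω ^ 2 ∂μ = ∫ ω, X ω ^ 2 ∂μ := by
  rw [truncSecondMoment, ← compl_setOf_abs_le_one,
    integral_add_compl (measurableSet_abs_le_one hX) hX2]

variable [IsFiniteMeasure μ]

lemma integrable_comp_of_abs_le (hX : Measurable X) {f : ℝ → ℝ} (hf : Continuous f) {C : ℝ}
    (hC : ∀ t, |f t| ≤ C) : Integrable (fun ω => f (X ω)) μ :=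
  .of_bound (hf.measurable.comp hX).aestronglyMeasurable C (ae_of_all _ fun ω => hC (X ω))

lemma truncSecondMoment_le_measureReal (hX : Measurable X)
    (hX2 : Integrable (fun ω => X ω ^ 2) μ) :
    truncSecondMoment μ X ≤ μ.real {ω | |X ω| ≤ 1} := by
  calc truncSecondMoment μ X ≤ ∫ ω in {ω | |X ω| ≤ 1}, 1 ∂μ :=
        setIntegral_mono_on hX2.integrableOn (integrable_const 1).integrableOn
          (measurableSet_abs_le_one hX) fun ω hω => (sq_le_one_iff_abs_le_one _).2 hω
    _ = μ.real {ω | |X ω| ≤ 1} := by simp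

lemma setIntegral_sq_sub_eq (hX2 : Integrable (fun ω => X ω ^ 2) μ) (m : ℝ) :
    ∫ ω in {ω | |X ω| ≤ 1}, (X ω ^ 2 - m) ∂μ =
      truncSecondMoment μ X - μ.real {ω | |X ω| ≤ 1} * m := by
  rw [integral_sub hX2.integrableOn (integrable_const m).integrableOn, setIntegral_const,
    smul_eq_mul, truncSecondMoment]

lemma integrable_expWeight (hX : Measurable X) : Integrable (fun ω => expWeight (X ω)) μ :=
  integrable_comp_of_abs_le hX continuous_expWeight fun t => by
    rw [abs_of_nonneg (expWeight_nonneg t)]; exact expWeight_le t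

lemma integrable_expWeight_mul_sub_sq (hX : Measurable X) {m : ℝ} (hm0 : 0 ≤ m)
    (hm1 : m ≤ 1) :
    Integrable (fun ω => expWeight (X ω) * (m - X ω ^ 2)) μ :=
  integrable_comp_of_abs_le hX (f := fun t => expWeight t * (m - t ^ 2)) (by fun_prop)
    (C := 0.825 + 3.05) fun t => by
      have h := abs_sub m (t ^ 2)
      rw [abs_of_nonneg hm0, abs_of_nonneg (sq_nonneg t)] at h
      rw [abs_mul, abs_of_nonneg (expWeight_nonneg t)]
      nlinarith [mul_le_mul_of_nonneg_left h (expWeight_nonneg t), expWeight_le t,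
        expWeight_mul_sq_le t, mul_le_mul_of_nonneg_left hm1 (expWeight_nonneg t)]

lemma integrable_expWeight_mul_sq_sub_sq (hX : Measurable X)
    (hX2 : Integrable (fun ω => X ω ^ 2) μ) {m : ℝ} (hm0 : 0 ≤ m) (hm1 : m ≤ 1) :
    Integrable (fun ω => expWeight (X ω) * (X ω ^ 2 - m) ^ 2) μ :=
  ((hX2.const_mul 3.05).add (integrable_const 1)).mono' (by fun_prop)
    (ae_of_all _ fun ω => by
      rw [norm_of_nonneg (mul_nonneg (expWeight_nonneg _) (sq_nonneg _))]
      exact expWeight_mul_sq_sub_sq_le hm0 hm1)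

variable [IsProbabilityMeasure μ]

lemma truncSecondMoment_le_one (hX : Measurable X) (hX2 : Integrable (fun ω => X ω ^ 2) μ) :
    truncSecondMoment μ X ≤ 1 :=
  (truncSecondMoment_le_measureReal hX hX2).trans measureReal_le_one

lemma integral_expWeight_mul_sq_sub_sq_le (hX : Measurable X)
    (hX2 : Integrable (fun ω => X ω ^ 2) μ) :
    ∫ ω, expWeight (X ω) * (X ω ^ 2 - truncSecondMoment μ X) ^ 2 ∂μ ≤
      (∫ ω in {ω | |X ω| ≤ 1}, |X ω| ^ 3 ∂μ) +
        (3.05 - 0.6 * truncSecondMoment μ X) * ∫ ω in {ω | 1 < |X ω|}, X ω ^ 2 ∂μ := by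
  set m := truncSecondMoment μ X
  have hm0 : 0 ≤ m := truncSecondMoment_nonneg
  have hm1 : m ≤ 1 := truncSecondMoment_le_one hX hX2
  have hA := measurableSet_abs_le_one hX
  have hint := integrable_expWeight_mul_sq_sub_sq hX hX2 hm0 hm1
  have hcube : IntegrableOn (fun ω => |X ω| ^ 3) {ω | |X ω| ≤ 1} μ :=
    hX2.integrableOn.mono' (by fun_prop) <| (ae_restrict_iff' hA).2 <|
      ae_of_all _ fun ω hω => by
      rw [norm_of_nonneg (by positivity), ← sq_abs]
      exact pow_le_pow_of_le_one (abs_nonneg _) hω (by norm_num)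
  have hcorr : IntegrableOn (fun ω => 0.4 * m ^ 2 * (X ω ^ 2 - m)) {ω | |X ω| ≤ 1} μ :=
    ((hX2.sub (integrable_const m)).const_mul _).integrableOn
  refine (integral_comp_le_of_abs_le_one hX (f := fun t => expWeight t * (t ^ 2 - m) ^ 2)
    (a := fun t => |t| ^ 3 - 0.4 * m ^ 2 * (t ^ 2 - m))
    (b := fun t => (3.05 - 0.6 * m) * t ^ 2)
    hint (hcube.sub hcorr) (hX2.const_mul _).integrableOn
    (fun t ht => by linarith [expWeight_mul_sq_sub_sq_add_le_of_abs_le_one ht hm0])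
    (fun t ht => expWeight_mul_sq_sub_sq_le_of_one_le_abs ht.le hm0 hm1)).trans ?_
  rw [integral_sub hcube hcorr, integral_const_mul, setIntegral_sq_sub_eq hX2,
    integral_const_mul]
  have hμ : μ.real {ω | |X ω| ≤ 1} ≤ 1 := measureReal_le_one
  nlinarith [mul_nonneg (mul_nonneg hm0 hm0) (mul_nonneg hm0 (sub_nonneg.2 hμ))]

lemma integral_expWeight_mul_sub_sq_le (hX : Measurable X)
    (hX2 : Integrable (fun ω => X ω ^ 2) μ) :
    ∫ ω, expWeight (X ω) * (truncSecondMoment μ X - X ω ^ 2) ∂μ ≤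
      min (0.439 * truncSecondMoment μ X * √(truncSecondMoment μ X))
        (0.825 * truncSecondMoment μ X * (1 - truncSecondMoment μ X)) := by
  set m := truncSecondMoment μ X
  have hm0 : 0 ≤ m := truncSecondMoment_nonneg
  have hm1 : m ≤ 1 := truncSecondMoment_le_one hX hX2
  have hint := integrable_expWeight_mul_sub_sq hX hm0 hm1 (μ := μ)
  refine le_min ?_ ?_
  · calc ∫ ω, expWeight (X ω) * (m - X ω ^ 2) ∂μ ≤ ∫ ω, 0.439 * m * √m ∂μ :=
          integral_mono hint (integrable_const _) fun ω => expWeight_mul_sub_sq_le_sqrt hm0 hm1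
      _ = 0.439 * m * √m := by simp
  · refine (integral_comp_le_of_abs_le_one hX (f := fun t => expWeight t * (m - t ^ 2))
      (a := fun t => -(0.825 * m) * (t ^ 2 - 1)) (b := fun _ => 0) hint
      ((hX2.sub (integrable_const 1)).const_mul _).integrableOn
      (integrable_const 0).integrableOn
      (fun t ht => by linarith [expWeight_mul_sub_sq_le_of_abs_le_one ht hm0 hm1])
      (fun t ht => expWeight_mul_sub_sq_nonpos_of_one_lt_abs ht hm1)).trans ?_
    rw [integral_const_mul, setIntegral_sq_sub_eq hX2, integral_zero]
    have hμ : μ.real {ω | |X ω| ≤ 1} ≤ 1 := measureReal_le_one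
    nlinarith

lemma integral_expWeight_mul_sq_sub_integral_le (hX : Measurable X)
    (hX2 : Integrable (fun ω => X ω ^ 2) μ) :
    ∫ ω, expWeight (X ω) * (X ω ^ 2 - ∫ ω, X ω ^ 2 ∂μ) ^ 2 ∂μ ≤
      3.1 * (∫ ω in {ω | 1 < |X ω|}, X ω ^ 2 ∂μ) +
        (∫ ω in {ω | |X ω| ≤ 1}, |X ω| ^ 3 ∂μ) + (∫ ω in {ω | 1 < |X ω|}, X ω ^ 2 ∂μ) ^ 2 := by
  rw [← truncSecondMoment_add hX hX2]
  set m := truncSecondMoment μ X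
  set δ := ∫ ω in {ω | 1 < |X ω|}, X ω ^ 2 ∂μ
  have hm0 : 0 ≤ m := truncSecondMoment_nonneg
  have hm1 : m ≤ 1 := truncSecondMoment_le_one hX hX2
  have hδ : 0 ≤ δ := setIntegral_nonneg_of_ae_restrict (ae_of_all _ fun ω => sq_nonneg _)
  have hi1 := integrable_expWeight_mul_sq_sub_sq hX hX2 hm0 hm1
  have hi2 : Integrable (fun ω => 2 * δ * (expWeight (X ω) * (m - X ω ^ 2))) μ :=
    (integrable_expWeight_mul_sub_sq hX hm0 hm1).const_mul _
  have hi12 : Integrable (fun ω => expWeight (X ω) * (X ω ^ 2 - m) ^ 2 +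
      2 * δ * (expWeight (X ω) * (m - X ω ^ 2))) μ := hi1.add hi2
  have hi3 : Integrable (fun ω => δ ^ 2 * expWeight (X ω)) μ :=
    (integrable_expWeight hX).const_mul _
  have hexpand : ∀ ω, expWeight (X ω) * (X ω ^ 2 - (m + δ)) ^ 2 =
      expWeight (X ω) * (X ω ^ 2 - m) ^ 2 + 2 * δ * (expWeight (X ω) * (m - X ω ^ 2)) +
        δ ^ 2 * expWeight (X ω) := fun ω => by ring
  simp_rw [hexpand]
  rw [integral_add hi12 hi3, integral_add hi1 hi2, integral_const_mul, integral_const_mul]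
  have h1 := integral_expWeight_mul_sq_sub_sq_le hX hX2
  have h2 := integral_expWeight_mul_sub_sq_le hX hX2
  have h3 : ∫ ω, expWeight (X ω) ∂μ ≤ 1 := by
    calc ∫ ω, expWeight (X ω) ∂μ ≤ ∫ ω, 1 ∂μ :=
          integral_mono (integrable_expWeight hX) (integrable_const 1)
            fun ω => (expWeight_le _).trans (by norm_num)
      _ = 1 := by simp
  nlinarith [mul_le_mul_of_nonneg_left h2 (by positivity : 0 ≤ 2 * δ),
    mul_le_mul_of_nonneg_left h3 (sq_nonneg δ),
    mul_le_mul_of_nonneg_right (sub_add_two_mul_min_le hm0 hm1) hδ]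

end

theorem lemma_l3_d_general {Ω : Type*} [MeasurableSpace Ω] (μ : Measure Ω) [IsProbabilityMeasure μ]
    (X : Ω → ℝ) (hX : Measurable X) (hX2 : Integrable (fun ω => X ω ^ 2) μ)
    (Y Z : Ω → ℝ) (hY : ∀ ω, Y ω = X ω - X ω ^ 2 / 2)
    (hZ : ∀ ω, Z ω = X ω ^ 2 - ∫ ω, X ω ^ 2 ∂μ)
    (δ₁₁ δ₁₂ : ℝ) (hδ₁₁ : δ₁₁ = ∫ ω in {ω | 1 < |X ω|}, X ω ^ 2 ∂μ)
    (hδ₁₂ : δ₁₂ = ∫ ω in {ω | |X ω| ≤ 1}, |X ω| ^ 3 ∂μ) :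
    ∫ ω, |Y ω| * Z ω ^ 2 * Real.exp (Y ω) ∂μ ≤ 3.1 * δ₁₁ + δ₁₂ + δ₁₁ ^ 2 := by
  have hintegrand : ∀ ω, |Y ω| * Z ω ^ 2 * exp (Y ω) =
      expWeight (X ω) * (X ω ^ 2 - ∫ ω, X ω ^ 2 ∂μ) ^ 2 := fun ω => by
    rw [hY, hZ, expWeight]; ring
  simp_rw [hintegrand]
  rw [hδ₁₁, hδ₁₂]
  exact integral_expWeight_mul_sq_sub_integral_le hX hX2

theorem lemma_l3_d {Ω : Type*} [MeasurableSpace Ω] (μ : Measure Ω) [IsProbabilityMeasure μ]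
    (X : Ω → ℝ) (hX : Measurable X) (hX2 : Integrable (fun ω => X ω ^ 2) μ)
    (hmean : ∫ ω, X ω ∂μ = 0)
    (Y Z : Ω → ℝ) (hY : ∀ ω, Y ω = X ω - X ω ^ 2 / 2)
    (hZ : ∀ ω, Z ω = X ω ^ 2 - ∫ ω, X ω ^ 2 ∂μ)
    (δ₁₁ δ₁₂ : ℝ) (hδ₁₁ : δ₁₁ = ∫ ω in {ω | 1 < |X ω|}, X ω ^ 2 ∂μ)
    (hδ₁₂ : δ₁₂ = ∫ ω in {ω | |X ω| ≤ 1}, |X ω| ^ 3 ∂μ) :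
    ∫ ω, |Y ω| * Z ω ^ 2 * Real.exp (Y ω) ∂μ ≤ 3.1 * δ₁₁ + δ₁₂ + δ₁₁ ^ 2 :=
  lemma_l3_d_general μ X hX hX2 Y Z hY hZ δ₁₁ δ₁₂ hδ₁₁ hδ₁₂
end

section
/- Let ξ₁,…,ξₙ be independent real random variables with E ξᵢ = 0 and Σ E ξᵢ² = 1, and set W = Σξᵢ, V² = Σξᵢ², β₃ = Σ E[|ξᵢ|³ 1{|ξᵢ|≤1}], and ξ̄ᵢ = ξᵢ 1{|ξᵢ| ≤ 1}. Then E[(Σᵢ(ξ̄ᵢ² - E ξ̄ᵢ²))²] ≤ β₃ and E[W² (Σᵢ(E ξ̄ᵢ² - ξ̄ᵢ²))²] ≤ 4 β₃. -/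
/-!
With `Yᵢ = ξ̄ᵢ² - E ξ̄ᵢ²`, the pairs `(ξᵢ, Yᵢ)` are independent and centered, and `|Yᵢ| ≤ 1`.
The first quantity is `E (Σ Yᵢ)² = Σ E Yᵢ² ≤ Σ E ξ̄ᵢ⁴ ≤ β₃`. For the second, expanding
`E[(Σ ξᵢ)² (Σ Yᵢ)²]` over independent centered pairs leaves
`Σᵢ E ξᵢ²Yᵢ² + Σ_{i ≠ j} (E ξᵢ² E Yⱼ² + 2 E[ξᵢYᵢ] E[ξⱼYⱼ])`. Since `ξᵢ ξ̄ᵢ² = ξ̄ᵢ³`, we have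
`E[ξᵢYᵢ] = E ξ̄ᵢ³`, so the paired products contribute at most `2 β₃² ≤ 2 β₃`; using `Σ E ξᵢ² = 1`
the remaining terms are `Σᵢ (E ξᵢ²Yᵢ² + (1 - E ξᵢ²) E Yᵢ²)`, and each summand is at most
`2 E|ξ̄ᵢ|³` by comparing the moments `E ξ̄ᵢ⁶ ≤ E ξ̄ᵢ⁴ ≤ E|ξ̄ᵢ|³` and `(E ξ̄ᵢ²)² ≤ E ξ̄ᵢ⁴`.
-/

open MeasureTheory ProbabilityTheory
open scoped ENNReal

section

variable {Ω : Type*} [MeasurableSpace Ω] {μ : Measure Ω}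

theorem integral_add_sq_mul_add_sq_of_indepFun {S T X Y : Ω → ℝ}
    (hind : IndepFun (fun ω => (S ω, T ω)) (fun ω => (X ω, Y ω)) μ)
    (hS : MemLp S 2 μ) (hX : MemLp X 2 μ) (hT : MemLp T ∞ μ) (hY : MemLp Y ∞ μ)
    (hS0 : μ[S] = 0) (hT0 : μ[T] = 0) (hX0 : μ[X] = 0) (hY0 : μ[Y] = 0) :
    ∫ ω, (S ω + X ω) ^ 2 * (T ω + Y ω) ^ 2 ∂μ =
      ∫ ω, S ω ^ 2 * T ω ^ 2 ∂μ + (∫ ω, S ω ^ 2 ∂μ) * (∫ ω, Y ω ^ 2 ∂μ)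
        + 4 * (∫ ω, S ω * T ω ∂μ) * (∫ ω, X ω * Y ω ∂μ)
        + (∫ ω, T ω ^ 2 ∂μ) * (∫ ω, X ω ^ 2 ∂μ) + ∫ ω, X ω ^ 2 * Y ω ^ 2 ∂μ := by
  have factor : ∀ f g : ℝ × ℝ → ℝ, Measurable f → Measurable g →
      ∫ ω, f (S ω, T ω) * g (X ω, Y ω) ∂μ
        = (∫ ω, f (S ω, T ω) ∂μ) * ∫ ω, g (X ω, Y ω) ∂μ := fun f g hf hg =>
    (hind.comp hf hg).integral_fun_mul_eq_mul_integral
      (hf.comp_aemeasurable (hS.aemeasurable.prodMk hT.aemeasurable)).aestronglyMeasurable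
      (hg.comp_aemeasurable (hX.aemeasurable.prodMk hY.aemeasurable)).aestronglyMeasurable
  have hS2 : Integrable (fun ω => S ω ^ 2) μ := hS.integrable_sq
  have hX2 : Integrable (fun ω => X ω ^ 2) μ := hX.integrable_sq
  have hT2 : MemLp (fun ω => T ω ^ 2) ∞ μ := by simpa only [pow_two] using hT.mul' hT
  have hY2 : MemLp (fun ω => Y ω ^ 2) ∞ μ := by simpa only [pow_two] using hY.mul' hY
  have hS2T2 : Integrable (fun ω => S ω ^ 2 * T ω ^ 2) μ := hS2.mul_of_top_left hT2
  have hS2TY : Integrable (fun ω => S ω ^ 2 * T ω * Y ω) μ :=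
    (hS2.mul_of_top_left hT).mul_of_top_left hY
  have hS2Y2 : Integrable (fun ω => S ω ^ 2 * Y ω ^ 2) μ := hS2.mul_of_top_left hY2
  have hST2X : Integrable (fun ω => S ω * T ω ^ 2 * X ω) μ :=
    (hT2.mul (r := 2) hS).integrable_mul hX
  have hSTXY : Integrable (fun ω => S ω * T ω * (X ω * Y ω)) μ :=
    (hT.mul (r := 2) hS).integrable_mul (hY.mul (r := 2) hX)
  have hSXY2 : Integrable (fun ω => S ω * (X ω * Y ω ^ 2)) μ :=
    hS.integrable_mul (hY2.mul (r := 2) hX)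
  have hT2X2 : Integrable (fun ω => T ω ^ 2 * X ω ^ 2) μ := hX2.mul_of_top_right hT2
  have hTX2Y : Integrable (fun ω => T ω * (X ω ^ 2 * Y ω)) μ :=
    (hX2.mul_of_top_left hY).mul_of_top_right hT
  have hX2Y2 : Integrable (fun ω => X ω ^ 2 * Y ω ^ 2) μ := hX2.mul_of_top_left hY2
  have expand : ∀ ω, (S ω + X ω) ^ 2 * (T ω + Y ω) ^ 2 = S ω ^ 2 * T ω ^ 2
      + 2 * (S ω ^ 2 * T ω * Y ω) + S ω ^ 2 * Y ω ^ 2 + 2 * (S ω * T ω ^ 2 * X ω)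
      + 4 * (S ω * T ω * (X ω * Y ω)) + 2 * (S ω * (X ω * Y ω ^ 2)) + T ω ^ 2 * X ω ^ 2
      + 2 * (T ω * (X ω ^ 2 * Y ω)) + X ω ^ 2 * Y ω ^ 2 := fun ω => by ring
  simp_rw [expand]
  simp (disch := fun_prop) only [integral_add, integral_const_mul]
  rw [factor (fun p => p.1 ^ 2 * p.2) Prod.snd (by fun_prop) (by fun_prop),
    factor (fun p => p.1 ^ 2) (fun q => q.2 ^ 2) (by fun_prop) (by fun_prop),
    factor (fun p => p.1 * p.2 ^ 2) Prod.fst (by fun_prop) (by fun_prop),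
    factor (fun p => p.1 * p.2) (fun q => q.1 * q.2) (by fun_prop) (by fun_prop),
    factor Prod.fst (fun q => q.1 * q.2 ^ 2) (by fun_prop) (by fun_prop),
    factor (fun p => p.2 ^ 2) (fun q => q.1 ^ 2) (by fun_prop) (by fun_prop),
    factor Prod.snd (fun q => q.1 ^ 2 * q.2) (by fun_prop) (by fun_prop)]
  simp only [hS0, hT0, hX0, hY0]
  ring

theorem integral_finsetSum_eq_zero {ι : Type*} {Z : ι → Ω → ℝ} (hZ : ∀ i, Integrable (Z i) μ)
    (hZ0 : ∀ i, μ[Z i] = 0) (s : Finset ι) : ∫ ω, ∑ i ∈ s, Z i ω ∂μ = 0 := by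
  rw [integral_finsetSum s fun i _ => hZ i]
  exact Finset.sum_eq_zero fun i _ => hZ0 i

theorem integral_sum_mul_sum_of_indepFun [IsProbabilityMeasure μ] {ι : Type*}
    {X Y : ι → Ω → ℝ} (hXY : Pairwise fun i j => IndepFun (X i) (Y j) μ)
    (hX : ∀ i, MemLp (X i) 2 μ) (hY : ∀ i, MemLp (Y i) 2 μ)
    (hX0 : ∀ i, μ[X i] = 0) (hY0 : ∀ i, μ[Y i] = 0) (s : Finset ι) :
    ∫ ω, (∑ i ∈ s, X i ω) * (∑ i ∈ s, Y i ω) ∂μ = ∑ i ∈ s, ∫ ω, X i ω * Y i ω ∂μ := by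
  have cov_eq {U V : Ω → ℝ} (hU : μ[U] = 0) (hV : μ[V] = 0) :
      cov[U, V; μ] = ∫ ω, U ω * V ω ∂μ := by
    simp only [covariance, hU, hV, sub_zero]
  calc ∫ ω, (∑ i ∈ s, X i ω) * (∑ i ∈ s, Y i ω) ∂μ
      = cov[fun ω => ∑ i ∈ s, X i ω, fun ω => ∑ i ∈ s, Y i ω; μ] :=
        (cov_eq (integral_finsetSum_eq_zero (fun i => (hX i).integrable one_le_two) hX0 s)
          (integral_finsetSum_eq_zero (fun i => (hY i).integrable one_le_two) hY0 s)).symm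
    _ = ∑ i ∈ s, ∑ j ∈ s, cov[X i, Y j; μ] :=
        covariance_fun_sum_fun_sum' (fun i _ => hX i) (fun i _ => hY i)
    _ = ∑ i ∈ s, cov[X i, Y i; μ] := Finset.sum_congr rfl fun i hi =>
        Finset.sum_eq_single i (fun j _ hji => (hXY hji.symm).covariance_eq_zero (hX i) (hY j))
          (absurd hi)
    _ = ∑ i ∈ s, ∫ ω, X i ω * Y i ω ∂μ :=
        Finset.sum_congr rfl fun i _ => cov_eq (hX0 i) (hY0 i)

theorem integral_sum_sq_mul_sum_sq_of_iIndepFun [IsProbabilityMeasure μ] {ι : Type*}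
    {X Y : ι → Ω → ℝ} (hind : iIndepFun (fun i ω => (X i ω, Y i ω)) μ)
    (hX : ∀ i, MemLp (X i) 2 μ) (hY : ∀ i, MemLp (Y i) ∞ μ)
    (hX0 : ∀ i, μ[X i] = 0) (hY0 : ∀ i, μ[Y i] = 0) (s : Finset ι) :
    ∫ ω, (∑ i ∈ s, X i ω) ^ 2 * (∑ i ∈ s, Y i ω) ^ 2 ∂μ =
      ∑ i ∈ s, ∫ ω, X i ω ^ 2 * Y i ω ^ 2 ∂μ
        + (∑ i ∈ s, ∫ ω, X i ω ^ 2 ∂μ) * (∑ i ∈ s, ∫ ω, Y i ω ^ 2 ∂μ)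
        - ∑ i ∈ s, (∫ ω, X i ω ^ 2 ∂μ) * (∫ ω, Y i ω ^ 2 ∂μ)
        + 2 * (∑ i ∈ s, ∫ ω, X i ω * Y i ω ∂μ) ^ 2
        - 2 * ∑ i ∈ s, (∫ ω, X i ω * Y i ω ∂μ) ^ 2 := by
  classical
  have hY2 : ∀ i, MemLp (Y i) 2 μ := fun i => (hY i).mono_exponent le_top
  have hpair : ∀ {i j}, i ≠ j →
      IndepFun (fun ω => (X i ω, Y i ω)) (fun ω => (X j ω, Y j ω)) μ :=
    fun hij => hind.indepFun hij
  have sum_sq {Z : ι → Ω → ℝ} (hZ : ∀ i, MemLp (Z i) 2 μ) (hZ0 : ∀ i, μ[Z i] = 0)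
      (hZZ : Pairwise fun i j => IndepFun (Z i) (Z j) μ) (t : Finset ι) :
      ∫ ω, (∑ i ∈ t, Z i ω) ^ 2 ∂μ = ∑ i ∈ t, ∫ ω, Z i ω ^ 2 ∂μ := by
    simpa only [pow_two] using integral_sum_mul_sum_of_indepFun hZZ hZ hZ hZ0 hZ0 t
  have hXX : Pairwise fun i j => IndepFun (X i) (X j) μ := fun i j hij =>
    (hpair hij).comp measurable_fst measurable_fst
  have hYY : Pairwise fun i j => IndepFun (Y i) (Y j) μ := fun i j hij =>
    (hpair hij).comp measurable_snd measurable_snd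
  have hXY : Pairwise fun i j => IndepFun (X i) (Y j) μ := fun i j hij =>
    (hpair hij).comp measurable_fst measurable_snd
  induction s using Finset.induction_on with
  | empty => simp
  | @insert a s ha ih =>
    have hblock : IndepFun (fun ω => (∑ i ∈ s, X i ω, ∑ i ∈ s, Y i ω))
        (fun ω => (X a ω, Y a ω)) μ := by
      have := hind.indepFun_finsetSum_of_notMem₀
        (fun i => ((hX i).aemeasurable.prodMk (hY i).aemeasurable)) ha
      convert this using 1
      ext ω <;> simp [Prod.fst_sum, Prod.snd_sum]
    simp only [Finset.sum_insert ha]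
    simp_rw [add_comm (X a _), add_comm (Y a _)]
    rw [integral_add_sq_mul_add_sq_of_indepFun hblock (memLp_finsetSum s fun i _ => hX i) (hX a)
        (memLp_finsetSum s fun i _ => hY i) (hY a)
        (integral_finsetSum_eq_zero (fun i => (hX i).integrable one_le_two) hX0 s)
        (integral_finsetSum_eq_zero (fun i => (hY2 i).integrable one_le_two) hY0 s)
        (hX0 a) (hY0 a),
      sum_sq hX hX0 hXX, sum_sq hY2 hY0 hYY, integral_sum_mul_sum_of_indepFun hXY hX hY2 hX0 hY0,
      ih]
    ring

noncomputable def truncOne (x : ℝ) : ℝ := if |x| ≤ 1 then x else 0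

@[fun_prop]
theorem measurable_truncOne : Measurable truncOne :=
  Measurable.ite (measurableSet_le measurable_abs measurable_const) measurable_id measurable_const

theorem abs_truncOne_le_one (x : ℝ) : |truncOne x| ≤ 1 := by
  unfold truncOne; split_ifs with h <;> simp [h]

theorem truncOne_sq_le_sq (x : ℝ) : truncOne x ^ 2 ≤ x ^ 2 := by
  unfold truncOne; split_ifs <;> simp [sq_nonneg]

theorem mul_truncOne_sq_sub (x c : ℝ) :
    x * (truncOne x ^ 2 - c) = truncOne x ^ 3 - c * x := by
  unfold truncOne; split_ifs <;> ring

theorem sq_mul_truncOne_sq_sub_sq (x c : ℝ) :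
    x ^ 2 * (truncOne x ^ 2 - c) ^ 2
      = truncOne x ^ 6 - 2 * c * truncOne x ^ 4 + c ^ 2 * x ^ 2 := by
  unfold truncOne; split_ifs <;> ring

theorem truncOne_pow_le_abs_truncOne_pow {x : ℝ} {m n : ℕ} (hm : Even m) (hnm : n ≤ m) :
    truncOne x ^ m ≤ |truncOne x| ^ n := by
  rw [← hm.pow_abs]
  exact pow_le_pow_of_le_one (abs_nonneg _) (abs_truncOne_le_one x) hnm

theorem abs_truncOne_pow_le_truncOne_pow {x : ℝ} {m n : ℕ} (hm : Even m) (hmn : m ≤ n) :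
    |truncOne x| ^ n ≤ truncOne x ^ m := by
  rw [← hm.pow_abs]
  exact pow_le_pow_of_le_one (abs_nonneg _) (abs_truncOne_le_one x) hmn

theorem memLp_top_truncOne_pow {Z : Ω → ℝ} (hZ : AEMeasurable Z μ) (k : ℕ) :
    MemLp (fun ω => truncOne (Z ω) ^ k) ∞ μ :=
  memLp_top_of_bound ((measurable_truncOne.comp_aemeasurable hZ).pow_const k).aestronglyMeasurable
    1 (.of_forall fun ω => by
      simpa [abs_pow] using pow_le_one₀ (abs_nonneg _) (abs_truncOne_le_one (Z ω)))

theorem setIntegral_abs_pow_eq_integral_abs_truncOne_pow {Z : Ω → ℝ} (hZ : Measurable Z) {k : ℕ}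
    (hk : k ≠ 0) :
    ∫ ω in {ω | |Z ω| ≤ 1}, |Z ω| ^ k ∂μ = ∫ ω, |truncOne (Z ω)| ^ k ∂μ := by
  rw [← integral_indicator (measurableSet_le hZ.abs measurable_const)]
  congr 1 with ω
  by_cases h : |Z ω| ≤ 1 <;> simp [truncOne, h, hk]

section Moments

variable [IsProbabilityMeasure μ] {Z : Ω → ℝ}

theorem integrable_truncOne_pow (hZ : AEMeasurable Z μ) (k : ℕ) :
    Integrable (fun ω => truncOne (Z ω) ^ k) μ :=
  (memLp_top_truncOne_pow hZ k).integrable le_top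

theorem integrable_abs_truncOne_pow (hZ : AEMeasurable Z μ) (k : ℕ) :
    Integrable (fun ω => |truncOne (Z ω)| ^ k) μ := by
  simpa only [abs_pow] using (integrable_truncOne_pow hZ k).abs

theorem integral_truncOne_sq_sub_sq (hZ : AEMeasurable Z μ) :
    ∫ ω, (truncOne (Z ω) ^ 2 - ∫ ω', truncOne (Z ω') ^ 2 ∂μ) ^ 2 ∂μ
      = ∫ ω, truncOne (Z ω) ^ 4 ∂μ - (∫ ω, truncOne (Z ω) ^ 2 ∂μ) ^ 2 := by
  set m := ∫ ω, truncOne (Z ω) ^ 2 ∂μ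
  have h2 := integrable_truncOne_pow hZ 2
  have h4 := integrable_truncOne_pow hZ 4
  have expand : ∀ ω, (truncOne (Z ω) ^ 2 - m) ^ 2
      = truncOne (Z ω) ^ 4 - 2 * m * truncOne (Z ω) ^ 2 + m ^ 2 := fun ω => by ring
  simp_rw [expand]
  simp (disch := fun_prop) only [integral_add, integral_sub, integral_const_mul, integral_const,
    probReal_univ, one_smul]
  ring

theorem integral_truncOne_sq_sub_integral (hZ : AEMeasurable Z μ) :
    ∫ ω, (truncOne (Z ω) ^ 2 - ∫ ω', truncOne (Z ω') ^ 2 ∂μ) ∂μ = 0 := by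
  simp [integral_sub (integrable_truncOne_pow hZ 2) (integrable_const _)]

theorem integral_truncOne_sq_sub_sq_le (hZ : AEMeasurable Z μ) :
    ∫ ω, (truncOne (Z ω) ^ 2 - ∫ ω', truncOne (Z ω') ^ 2 ∂μ) ^ 2 ∂μ
      ≤ ∫ ω, |truncOne (Z ω)| ^ 3 ∂μ := by
  rw [integral_truncOne_sq_sub_sq hZ]
  calc _ ≤ ∫ ω, truncOne (Z ω) ^ 4 ∂μ := sub_le_self _ (sq_nonneg _)
    _ ≤ _ := integral_mono (integrable_truncOne_pow hZ 4) (integrable_abs_truncOne_pow hZ 3)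
        fun ω => truncOne_pow_le_abs_truncOne_pow (by decide) (by norm_num)

theorem integral_mul_truncOne_sq_sub (hZ : Integrable Z μ) (hZ0 : μ[Z] = 0) (c : ℝ) :
    ∫ ω, Z ω * (truncOne (Z ω) ^ 2 - c) ∂μ = ∫ ω, truncOne (Z ω) ^ 3 ∂μ := by
  have h3 := integrable_truncOne_pow hZ.aemeasurable 3
  simp_rw [mul_truncOne_sq_sub]
  rw [integral_sub h3 (hZ.const_mul c), integral_const_mul, hZ0, mul_zero, sub_zero]

theorem integral_abs_truncOne_pow_three_le (hZ : MemLp Z 2 μ) :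
    ∫ ω, |truncOne (Z ω)| ^ 3 ∂μ ≤ ∫ ω, Z ω ^ 2 ∂μ :=
  integral_mono (integrable_abs_truncOne_pow hZ.aemeasurable 3) hZ.integrable_sq fun ω =>
    (abs_truncOne_pow_le_truncOne_pow even_two (by norm_num)).trans (truncOne_sq_le_sq (Z ω))

theorem integral_sq_mul_truncOne_sq_sub_sq_add_le (hZ : MemLp Z 2 μ)
    (hσ : ∫ ω, Z ω ^ 2 ∂μ ≤ 1) :
    ∫ ω, Z ω ^ 2 * (truncOne (Z ω) ^ 2 - ∫ ω', truncOne (Z ω') ^ 2 ∂μ) ^ 2 ∂μ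
      + (1 - ∫ ω, Z ω ^ 2 ∂μ) * ∫ ω, (truncOne (Z ω) ^ 2 - ∫ ω', truncOne (Z ω') ^ 2 ∂μ) ^ 2 ∂μ
      ≤ 2 * ∫ ω, |truncOne (Z ω)| ^ 3 ∂μ := by
  have hZm := hZ.aemeasurable
  have hvar := integral_truncOne_sq_sub_sq hZm
  set σ := ∫ ω, Z ω ^ 2 ∂μ
  set m := ∫ ω, truncOne (Z ω) ^ 2 ∂μ
  set q := ∫ ω, truncOne (Z ω) ^ 4 ∂μ
  set h := ∫ ω, truncOne (Z ω) ^ 6 ∂μ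
  set b := ∫ ω, |truncOne (Z ω)| ^ 3 ∂μ
  have hZ2 := hZ.integrable_sq
  have h2 := integrable_truncOne_pow hZm 2
  have h4 := integrable_truncOne_pow hZm 4
  have h6 := integrable_truncOne_pow hZm 6
  have expand : ∫ ω, Z ω ^ 2 * (truncOne (Z ω) ^ 2 - m) ^ 2 ∂μ = h - 2 * m * q + m ^ 2 * σ := by
    simp_rw [sq_mul_truncOne_sq_sub_sq]
    simp (disch := fun_prop) only [integral_add, integral_sub, integral_const_mul]
    rfl
  have hm0 : 0 ≤ m := integral_nonneg fun ω => sq_nonneg _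
  have hh0 : 0 ≤ h := integral_nonneg fun ω => (even_two_mul 3).pow_nonneg _
  have hmσ : m ≤ σ := integral_mono h2 hZ2 fun ω => truncOne_sq_le_sq (Z ω)
  have hhq : h ≤ q := integral_mono h6 h4 fun ω =>
    (truncOne_pow_le_abs_truncOne_pow (by decide) (by norm_num)).trans_eq
      ((by decide : Even 4).pow_abs _)
  have hqb : q ≤ b := integral_mono h4 (integrable_abs_truncOne_pow hZm 3) fun ω =>
    truncOne_pow_le_abs_truncOne_pow (by decide) (by norm_num)
  have hmq : 0 ≤ q - m ^ 2 := hvar ▸ integral_nonneg fun ω => sq_nonneg _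
  -- The left side is (h - 2mq + m³) + (m²(σ - m) + (1 - σ)(q - m²)); as m² ≤ q the first
  -- bracket is at most h and the second at most q(1 - m).
  rw [expand, hvar]
  nlinarith [mul_nonneg hm0 hmq, mul_nonneg hmq (sub_nonneg.2 hmσ),
    mul_nonneg (sub_nonneg.2 hσ) (sq_nonneg m), mul_nonneg hm0 (hh0.trans hhq)]

end Moments

theorem ProbabilityTheory.iIndepFun.prodMk_truncOne_sq_sub {ι : Type*} {ξ : ι → Ω → ℝ}
    (hindep : iIndepFun ξ μ) (c : ι → ℝ) :
    iIndepFun (fun i ω => (ξ i ω, truncOne (ξ i ω) ^ 2 - c i)) μ :=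
  hindep.comp (fun i x => (x, truncOne x ^ 2 - c i)) fun i => by fun_prop

section Sums

variable [IsProbabilityMeasure μ] {ι : Type*} [Fintype ι] {ξ : ι → Ω → ℝ}

theorem integral_sum_truncOne_sq_sub_sq_le (hmeas : ∀ i, AEMeasurable (ξ i) μ)
    (hindep : iIndepFun ξ μ) :
    ∫ ω, (∑ i, (truncOne (ξ i ω) ^ 2 - ∫ ω', truncOne (ξ i ω') ^ 2 ∂μ)) ^ 2 ∂μ
      ≤ ∑ i, ∫ ω, |truncOne (ξ i ω)| ^ 3 ∂μ := by
  set m : ι → ℝ := fun i => ∫ ω', truncOne (ξ i ω') ^ 2 ∂μ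
  set Y : ι → Ω → ℝ := fun i ω => truncOne (ξ i ω) ^ 2 - m i
  have hY : ∀ i, MemLp (Y i) 2 μ := fun i =>
    ((memLp_top_truncOne_pow (hmeas i) 2).sub (memLp_const _)).mono_exponent le_top
  have hYY : Pairwise fun i j => IndepFun (Y i) (Y j) μ := fun i j hij =>
    ((hindep.prodMk_truncOne_sq_sub m).indepFun hij).comp measurable_snd measurable_snd
  have hY0 : ∀ i, μ[Y i] = 0 := fun i => integral_truncOne_sq_sub_integral (hmeas i)
  calc ∫ ω, (∑ i, Y i ω) ^ 2 ∂μ = ∫ ω, (∑ i, Y i ω) * (∑ i, Y i ω) ∂μ := by simp_rw [pow_two]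
    _ = ∑ i, ∫ ω, Y i ω * Y i ω ∂μ := integral_sum_mul_sum_of_indepFun hYY hY hY hY0 hY0 _
    _ ≤ _ := Finset.sum_le_sum fun i _ => by
      simp_rw [← pow_two]
      exact integral_truncOne_sq_sub_sq_le (hmeas i)

theorem integral_sum_sq_mul_sum_truncOne_sq_sub_sq_le (hindep : iIndepFun ξ μ)
    (hξ : ∀ i, MemLp (ξ i) 2 μ) (hmean : ∀ i, μ[ξ i] = 0)
    (hnorm : ∑ i, ∫ ω, ξ i ω ^ 2 ∂μ = 1) :
    ∫ ω, (∑ i, ξ i ω) ^ 2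
        * (∑ i, ((∫ ω', truncOne (ξ i ω') ^ 2 ∂μ) - truncOne (ξ i ω) ^ 2)) ^ 2 ∂μ
      ≤ 4 * ∑ i, ∫ ω, |truncOne (ξ i ω)| ^ 3 ∂μ := by
  set m : ι → ℝ := fun i => ∫ ω', truncOne (ξ i ω') ^ 2 ∂μ
  set Y : ι → Ω → ℝ := fun i ω => truncOne (ξ i ω) ^ 2 - m i
  set β := ∑ i, ∫ ω, |truncOne (ξ i ω)| ^ 3 ∂μ
  have hY : ∀ i, MemLp (Y i) ∞ μ := fun i =>
    (memLp_top_truncOne_pow (hξ i).aemeasurable 2).sub (memLp_const _)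
  have hY0 : ∀ i, μ[Y i] = 0 := fun i => integral_truncOne_sq_sub_integral (hξ i).aemeasurable
  have hflip : ∀ ω, (∑ i, ((∫ ω', truncOne (ξ i ω') ^ 2 ∂μ) - truncOne (ξ i ω) ^ 2)) ^ 2
      = (∑ i, Y i ω) ^ 2 := fun ω => by
    rw [← neg_sq, ← Finset.sum_neg_distrib]
    simp only [neg_sub, Y, m]
  simp_rw [hflip]
  rw [integral_sum_sq_mul_sum_sq_of_iIndepFun (Y := Y) (hindep.prodMk_truncOne_sq_sub m) hξ hY
    hmean hY0, hnorm, one_mul]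
  have hσ1 : ∀ i, ∫ ω, ξ i ω ^ 2 ∂μ ≤ 1 := fun i => hnorm ▸
    Finset.single_le_sum (f := fun j => ∫ ω, ξ j ω ^ 2 ∂μ)
      (fun j _ => integral_nonneg fun ω => sq_nonneg (ξ j ω)) (Finset.mem_univ i)
  have hdiag : ∑ i, ∫ ω, ξ i ω ^ 2 * Y i ω ^ 2 ∂μ + ∑ i, ∫ ω, Y i ω ^ 2 ∂μ
      - ∑ i, (∫ ω, ξ i ω ^ 2 ∂μ) * ∫ ω, Y i ω ^ 2 ∂μ ≤ 2 * β := by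
    rw [← Finset.sum_add_distrib, ← Finset.sum_sub_distrib, Finset.mul_sum]
    refine Finset.sum_le_sum fun i _ => ?_
    have := integral_sq_mul_truncOne_sq_sub_sq_add_le (hξ i) (hσ1 i)
    linarith
  have hcross : |∑ i, ∫ ω, ξ i ω * Y i ω ∂μ| ≤ β := by
    have hκ : ∀ i, ∫ ω, ξ i ω * Y i ω ∂μ = ∫ ω, truncOne (ξ i ω) ^ 3 ∂μ := fun i =>
      integral_mul_truncOne_sq_sub ((hξ i).integrable one_le_two) (hmean i) (m i)
    simp only [hκ]
    refine (Finset.abs_sum_le_sum_abs _ _).trans (Finset.sum_le_sum fun i _ => ?_)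
    exact abs_integral_le_integral_abs.trans_eq (by simp_rw [abs_pow])
  have hβ1 : β ≤ 1 :=
    hnorm ▸ Finset.sum_le_sum fun i _ => integral_abs_truncOne_pow_three_le (hξ i)
  have hβ0 : 0 ≤ β := Finset.sum_nonneg fun i _ => integral_nonneg fun ω => by positivity
  have hcross_sq : (∑ i, ∫ ω, ξ i ω * Y i ω ∂μ) ^ 2 ≤ β := by
    rw [← sq_abs]
    nlinarith [abs_nonneg (∑ i, ∫ ω, ξ i ω * Y i ω ∂μ)]
  have := Finset.sum_nonneg fun i (_ : i ∈ Finset.univ) => sq_nonneg (∫ ω, ξ i ω * Y i ω ∂μ)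
  linarith

end Sums

end

theorem truncated_variance_bounds {Ω : Type*} [MeasurableSpace Ω]
    (μ : Measure Ω) [IsProbabilityMeasure μ] (n : ℕ)
    (ξ : Fin n → Ω → ℝ) (hmeas : ∀ i, Measurable (ξ i))
    (hindep : iIndepFun ξ μ)
    (hmean : ∀ i, ∫ ω, ξ i ω ∂μ = 0)
    (hvar : ∀ i, Integrable (fun ω => ξ i ω ^ 2) μ)
    (hnorm : ∑ i, ∫ ω, ξ i ω ^ 2 ∂μ = 1)
    (W : Ω → ℝ) (hW : ∀ ω, W ω = ∑ i, ξ i ω)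
    (ξb : Fin n → Ω → ℝ)
    (hξb : ∀ i ω, ξb i ω = if |ξ i ω| ≤ 1 then ξ i ω else 0)
    (β₃ : ℝ) (hβ₃ : β₃ = ∑ i, ∫ ω in {ω | |ξ i ω| ≤ 1}, |ξ i ω| ^ 3 ∂μ) :
    (∫ ω, (∑ i, (ξb i ω ^ 2 - ∫ ω', ξb i ω' ^ 2 ∂μ)) ^ 2 ∂μ) ≤ β₃ ∧
    (∫ ω, W ω ^ 2 * (∑ i, ((∫ ω', ξb i ω' ^ 2 ∂μ) - ξb i ω ^ 2)) ^ 2 ∂μ) ≤ 4 * β₃ := by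
  obtain rfl : ξb = fun i ω => truncOne (ξ i ω) := funext₂ hξb
  obtain rfl : W = fun ω => ∑ i, ξ i ω := funext hW
  have hξ : ∀ i, MemLp (ξ i) 2 μ := fun i =>
    (memLp_two_iff_integrable_sq (hmeas i).aestronglyMeasurable).2 (hvar i)
  have hβ : β₃ = ∑ i, ∫ ω, |truncOne (ξ i ω)| ^ 3 ∂μ := hβ₃.trans <| Finset.sum_congr rfl
    fun i _ => setIntegral_abs_pow_eq_integral_abs_truncOne_pow (hmeas i) three_ne_zero
  rw [hβ]
  exact ⟨integral_sum_truncOne_sq_sub_sq_le (fun i => (hmeas i).aemeasurable) hindep,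
    integral_sum_sq_mul_sum_truncOne_sq_sub_sq_le hindep hξ hmean hnorm⟩
end
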